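/- Let X be a set of s points in generic position in P^{n_1} × ⋯ × P^{n_k}, let D = min{i ∈ N^k : N(i) > s} (minimal elements under the componentwise partial order), and set T = D ∪ (⋃_{l=1}^k (D + e_l)). Then every minimal generator of I_X has degree lying in T; i.e., I_X is generated by ⊕_{i ∈ T} (I_X)_i. -/

import Mathlib

open MvPolynomial

namespace MultiProjPoints

/-- The variable set of the multigraded coordinate ring of
`ℙ^{n 0} × ⋯ × ℙ^{n (k-1)}`: variables `x_{i,j}` with `i : Fin k`, `0 ≤ j ≤ n i`. -/
abbrev Var (k : ℕ) (n : Fin k → ℕ) := Σ i : Fin k, Fin (n i + 1)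

/-- The `ℕ^k`-grading weight: `deg x_{i,j} = e_i`. -/
def wt (k : ℕ) (n : Fin k → ℕ) : Var k n → (Fin k → ℕ) := fun v => Pi.single v.1 1

/-- The `i`-th standard basis vector of `ℕ^k`. -/
def e {k : ℕ} (l : Fin k) : Fin k → ℕ := Pi.single l 1

variable (K : Type) [Field K]

/-- The graded piece `R_d` of the `ℕ^k`-graded polynomial ring. -/
noncomputable def piece (k : ℕ) (n : Fin k → ℕ) (d : Fin k → ℕ) :
    Submodule K (MvPolynomial (Var k n) K) :=
  weightedHomogeneousSubmodule K (wt k n) d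

/-- `N(d) = ∏ binom (n i + d i) (d i)`, the dimension of `R_d`. -/
def NN (k : ℕ) (n : Fin k → ℕ) (d : Fin k → ℕ) : ℕ := ∏ i, (n i + d i).choose (d i)

/-- A (representative of a) point of `ℙ^{n 0} × ⋯ × ℙ^{n (k-1)}`. -/
def PointRep (k : ℕ) (n : Fin k → ℕ) := (i : Fin k) → Fin (n i + 1) → K

/-- A valid representative: every coordinate block is nonzero. -/
def IsRep {k : ℕ} {n : Fin k → ℕ} (P : PointRep K k n) : Prop := ∀ i, P i ≠ 0

/-- Two representatives define the same point of multi-projective space. -/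
def ProjEq {k : ℕ} {n : Fin k → ℕ} (P Q : PointRep K k n) : Prop :=
  ∀ i, ∃ c : K, c ≠ 0 ∧ P i = c • Q i

/-- A tuple of representatives giving `s` distinct points. -/
def SPoints {k : ℕ} {n : Fin k → ℕ} {s : ℕ} (P : Fin s → PointRep K k n) : Prop :=
  (∀ a, IsRep K (P a)) ∧ ∀ a b, a ≠ b → ¬ ProjEq K (P a) (P b)

/-- The defining ideal `I_X` of the set of points: all polynomials vanishing on
the multi-cone over the points, i.e. the intersection of the point ideals. -/
noncomputable def idealOfPoints {k : ℕ} {n : Fin k → ℕ} {s : ℕ}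
    (P : Fin s → PointRep K k n) : Ideal (MvPolynomial (Var k n) K) :=
  ⨅ (a : Fin s), ⨅ (c : Fin k → K),
    RingHom.ker (eval (fun v : Var k n => c v.1 * P a v.1 v.2))

/-- The degree-`d` piece `I_d` of an ideal, as a `K`-subspace. -/
noncomputable def idealPiece {k : ℕ} {n : Fin k → ℕ}
    (I : Ideal (MvPolynomial (Var k n) K)) (d : Fin k → ℕ) :
    Submodule K (MvPolynomial (Var k n) K) :=
  (Submodule.restrictScalars K I) ⊓ piece K k n d

/-- The multigraded Hilbert function of `X`:
`H_X(d) = dim (R/I_X)_d = dim R_d - dim (I_X)_d`. -/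
noncomputable def hilbert {k : ℕ} {n : Fin k → ℕ} {s : ℕ}
    (P : Fin s → PointRep K k n) (d : Fin k → ℕ) : ℕ :=
  NN k n d - Module.finrank K (idealPiece K (idealOfPoints K P) d)

/-- Generic position: `s` distinct points whose Hilbert function is maximal. -/
def GenericPosition {k : ℕ} {n : Fin k → ℕ} {s : ℕ} (P : Fin s → PointRep K k n) : Prop :=
  SPoints K P ∧ ∀ d : Fin k → ℕ, hilbert K P d = min (NN k n d) s

/-- `R_{e_l}·V`: the span of all products of a variable of degree `e_l`
with an element of `V`. -/
noncomputable def mulSpan {k : ℕ} {n : Fin k → ℕ} (l : Fin k)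
    (V : Submodule K (MvPolynomial (Var k n) K)) :
    Submodule K (MvPolynomial (Var k n) K) :=
  Submodule.span K {g | ∃ (m : Fin (n l + 1)) (f : MvPolynomial (Var k n) K),
    f ∈ V ∧ g = X (⟨l, m⟩ : Var k n) * f}

/-- `D = min { i ∈ ℕ^k | N(i) > s }` (minimal elements for the componentwise order). -/
def Dset (k : ℕ) (n : Fin k → ℕ) (s : ℕ) : Set (Fin k → ℕ) :=
  {i | s < NN k n i ∧ ∀ j : Fin k → ℕ, s < NN k n j → j ≤ i → j = i}

/-- The irrelevant maximal ideal of `R`, generated by all the variables. -/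
noncomputable def irrelevant (k : ℕ) (n : Fin k → ℕ) : Ideal (MvPolynomial (Var k n) K) :=
  Ideal.span (Set.range (X : Var k n → MvPolynomial (Var k n) K))


/-!
`I_X` is multihomogeneous: `f(c·P) = ∑_d c^d f_d(P)` for every blockwise scaling `c`, and `K` is
infinite. Generic position says that evaluation at the points maps `R_c` onto `K^s` as soon as
`N(c) ≥ s`, so there are separators `h_b ∈ R_c` with `h_b(P_a) = δ_ab`. Subtracting
interpolants built from separators shows
`I_{c + e_l' + e_l} ⊆ R_{e_l} I_{c + e_l'} + R_{e_l'} I_{c + e_l}` whenever `N(c) ≥ s`.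
Now `I_d = 0` if `N(d) ≤ s`; otherwise `d` lies above some `D ∈ D`, and either `d ∈ T` or
`d = c + e_l' + e_l` with `c ≥ D`, so well-founded induction on `d` finishes the proof.
-/

open Finset

lemma mem_of_weightedHomogeneousComponent_mem {σ M R : Type*} [CommSemiring R]
    [AddCommMonoid M] {w : σ → M} {J : Ideal (MvPolynomial σ R)} {f : MvPolynomial σ R}
    (h : ∀ m, weightedHomogeneousComponent w m f ∈ J) : f ∈ J := by
  classical
  rw [← sum_weightedHomogeneousComponent w f,
    finsum_eq_sum _ (weightedHomogeneousComponent_finsupp f)]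
  exact J.sum_mem fun m _ => h m

section Degrees

variable {k : ℕ} {n : Fin k → ℕ}

lemma e_pos (l : Fin k) : 0 < e l := by
  rw [e, Pi.lt_def]
  exact ⟨fun _ => Nat.zero_le _, l, by simp⟩

lemma eq_zero_or_exists_eq_add_e (u : Fin k → ℕ) : u = 0 ∨ ∃ l v, u = v + e l := by
  rcases eq_or_ne u 0 with hu | hu
  · exact Or.inl hu
  obtain ⟨l, hl⟩ := Function.ne_iff.1 hu
  have hle : e l ≤ u := by
    intro i
    rw [e, Pi.single_apply]
    split_ifs with hi
    · subst hi
      exact Nat.one_le_iff_ne_zero.2 hl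
    · exact Nat.zero_le _
  exact Or.inr ⟨l, u - e l, (tsub_add_cancel_of_le hle).symm⟩

lemma NN_mono : Monotone (NN k n) := fun d d' h =>
  Finset.prod_le_prod' fun i _ => by
    rw [← Nat.choose_symm_add, ← Nat.choose_symm_add]
    exact Nat.choose_le_choose _ (Nat.add_le_add_left (h i) _)

lemma NN_pos (d : Fin k → ℕ) : 0 < NN k n d :=
  Finset.prod_pos fun _ _ => Nat.choose_pos (Nat.le_add_left _ _)

lemma exists_mem_Dset_le {s : ℕ} {d : Fin k → ℕ} (hd : s < NN k n d) :
    ∃ D ∈ Dset k n s, D ≤ d := by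
  obtain ⟨D, ⟨hD, hDd⟩, hmin⟩ := WellFounded.has_min wellFounded_lt
    {j | s < NN k n j ∧ j ≤ d} ⟨d, hd, le_rfl⟩
  exact ⟨D, ⟨hD, fun j hj hjD => (eq_or_lt_of_le hjD).resolve_right
    fun hlt => hmin j ⟨hj, hjD.trans hDd⟩ hlt⟩, hDd⟩

end Degrees

section Pieces

variable {K} {k : ℕ} {n : Fin k → ℕ}

lemma weight_wt_apply (α : Var k n →₀ ℕ) (i : Fin k) :
    Finsupp.weight (wt k n) α i = ∑ j, α ⟨i, j⟩ := by
  simp only [Finsupp.weight_apply, wt, nsmul_eq_mul, Nat.cast_zero, zero_mul, implies_true,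
    Finsupp.sum_fintype, Finset.sum_apply, Pi.mul_apply, Pi.natCast_apply, Nat.cast_id,
    Pi.single_apply, mul_ite, mul_one, mul_zero, Fintype.sum_sigma]
  rw [Fintype.sum_eq_single i fun j hj => by simp [Ne.symm hj]]
  simp

noncomputable def exponents (d : Fin k → ℕ) : Finset (Var k n →₀ ℕ) :=
  (Fintype.piFinset fun i => univ.finsuppAntidiag (d i)).map
    Finsupp.sigmaFinsuppEquivPiFinsupp.symm.toEmbedding

lemma mem_exponents {d : Fin k → ℕ} {α : Var k n →₀ ℕ} :
    α ∈ exponents d ↔ Finsupp.weight (wt k n) α = d := by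
  simp only [exponents, mem_map_equiv, Equiv.symm_symm, Fintype.mem_piFinset, mem_finsuppAntidiag,
    Finsupp.sigmaFinsuppEquivPiFinsupp_apply, subset_univ, and_true, funext_iff, weight_wt_apply]
  rfl

lemma card_exponents (d : Fin k → ℕ) : #(exponents (n := n) d) = NN k n d := by
  simp [exponents, Finset.card_finsuppAntidiag_nat_eq_choose, NN]

lemma piece_eq_restrictSupport (d : Fin k → ℕ) :
    piece K k n d = restrictSupport K (↑(exponents (n := n) d)) := by
  rw [piece, weightedHomogeneousSubmodule_eq_finsupp_supported, restrictSupport]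
  congr
  ext α
  simp [mem_exponents]

instance (d : Fin k → ℕ) : FiniteDimensional K (piece K k n d) := by
  rw [piece_eq_restrictSupport]
  exact Module.Finite.of_basis (basisRestrictSupport K _)

lemma finrank_piece (d : Fin k → ℕ) : Module.finrank K (piece K k n d) = NN k n d := by
  rw [piece_eq_restrictSupport, Module.finrank_eq_card_basis (basisRestrictSupport K _)]
  simp [card_exponents]

lemma X_mem_piece (v : Var k n) : (X v : MvPolynomial (Var k n) K) ∈ piece K k n (e v.1) :=
  isWeightedHomogeneous_X K (wt k n) v

lemma mul_mem_piece {A B : Fin k → ℕ} {f g : MvPolynomial (Var k n) K}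
    (hf : f ∈ piece K k n A) (hg : g ∈ piece K k n B) : f * g ∈ piece K k n (A + B) :=
  hf.mul hg

lemma piece_add_e_le_mulSpan (c : Fin k → ℕ) (l : Fin k) :
    piece K k n (c + e l) ≤ mulSpan K l (piece K k n c) := by
  classical
  rw [piece_eq_restrictSupport, restrictSupport, AddMonoidAlgebra.supported_eq_span_single,
    Submodule.span_le]
  rintro _ ⟨α, hα, rfl⟩
  have hα : Finsupp.weight (wt k n) α = c + e l := mem_exponents.1 hα
  obtain ⟨j, -, hj⟩ : ∃ j ∈ univ, 0 < α ⟨l, j⟩ := by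
    rw [← Finset.sum_pos_iff, ← weight_wt_apply, hα]
    simp [e]
  set v : Var k n := ⟨l, j⟩
  have hle : Finsupp.single v 1 ≤ α := Finsupp.single_le_iff.2 hj
  have hβ : Finsupp.weight (wt k n) (α - Finsupp.single v 1) = c := by
    apply add_right_cancel (b := e l)
    have hv : e l = Finsupp.weight (wt k n) (Finsupp.single v 1) := by
      rw [Finsupp.weight_single, one_smul]
      rfl
    rw [← hα, hv, ← map_add, tsub_add_cancel_of_le hle]
  refine Submodule.subset_span ⟨j, monomial (α - Finsupp.single v 1) 1,
    isWeightedHomogeneous_monomial _ _ _ hβ, ?_⟩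
  rw [X, monomial_mul, one_mul, add_tsub_cancel_of_le hle]
  rfl

lemma idealPiece_le_piece {I : Ideal (MvPolynomial (Var k n) K)} {d : Fin k → ℕ} :
    idealPiece K I d ≤ piece K k n d :=
  inf_le_right

instance (I : Ideal (MvPolynomial (Var k n) K)) (d : Fin k → ℕ) :
    FiniteDimensional K (idealPiece K I d) :=
  Submodule.finiteDimensional_of_le idealPiece_le_piece

lemma mul_mem_idealPiece {I : Ideal (MvPolynomial (Var k n) K)} {A B : Fin k → ℕ}
    {f g : MvPolynomial (Var k n) K} (hf : f ∈ piece K k n A) (hg : g ∈ idealPiece K I B) :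
    f * g ∈ idealPiece K I (A + B) :=
  ⟨I.mul_mem_left f hg.1, mul_mem_piece hf hg.2⟩

lemma mul_mem_mulSpan {l : Fin k} {V W : Submodule K (MvPolynomial (Var k n) K)}
    {L : MvPolynomial (Var k n) K} (hLV : ∀ f ∈ V, L * f ∈ W) {g : MvPolynomial (Var k n) K}
    (hg : g ∈ mulSpan K l V) : L * g ∈ mulSpan K l W := by
  induction hg using Submodule.span_induction with
  | mem g hg =>
    obtain ⟨m, f, hf, rfl⟩ := hg
    exact Submodule.subset_span ⟨m, L * f, hLV f hf, by ring⟩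
  | zero => simp
  | add f g _ _ hf hg => rw [mul_add]; exact add_mem hf hg
  | smul r g _ hg => rw [mul_smul_comm]; exact Submodule.smul_mem _ r hg

lemma mulSpan_le_restrictScalars {l : Fin k} {V : Submodule K (MvPolynomial (Var k n) K)}
    {J : Ideal (MvPolynomial (Var k n) K)} (hV : V ≤ J.restrictScalars K) :
    mulSpan K l V ≤ J.restrictScalars K := by
  rw [mulSpan, Submodule.span_le]
  rintro _ ⟨m, f, hf, rfl⟩
  exact J.mul_mem_left _ (hV hf)

end Pieces

section Evaluation

variable {K} {k : ℕ} {n : Fin k → ℕ} {s : ℕ}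

noncomputable def evalPoints (P : Fin s → PointRep K k n) :
    MvPolynomial (Var k n) K →ₗ[K] (Fin s → K) :=
  LinearMap.pi fun a => (aeval fun v : Var k n => P a v.1 v.2).toLinearMap

lemma evalPoints_apply (P : Fin s → PointRep K k n) (f : MvPolynomial (Var k n) K) (a : Fin s) :
    evalPoints P f a = eval (fun v => P a v.1 v.2) f := by
  simp [evalPoints]

lemma evalPoints_mul (P : Fin s → PointRep K k n) (f g : MvPolynomial (Var k n) K) (a : Fin s) :
    evalPoints P (f * g) a = evalPoints P f a * evalPoints P g a := by
  simp [evalPoints_apply]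

lemma eval_blockScale {d : Fin k → ℕ} {f : MvPolynomial (Var k n) K} (hf : f ∈ piece K k n d)
    (c : Fin k → K) (x : Var k n → K) :
    eval (fun v => c v.1 * x v) f = (∏ i, c i ^ d i) * eval x f := by
  rw [eval_eq', eval_eq', Finset.mul_sum]
  refine Finset.sum_congr rfl fun α hα => ?_
  have hc : ∏ v : Var k n, c v.1 ^ α v = ∏ i, c i ^ d i := by
    simp_rw [← hf (mem_support_iff.mp hα), weight_wt_apply, Fintype.prod_sigma,
      Finset.prod_pow_eq_pow_sum]
  simp_rw [mul_pow, Finset.prod_mul_distrib, hc]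
  ring

/-- The values `f_m(x)` are the coefficients of `c ↦ f(c·x)` as a polynomial in the block
scalars `c`; that polynomial vanishes on `K^k`, hence is zero since `K` is infinite. -/
lemma eval_weightedHomogeneousComponent_eq_zero [Infinite K] {f : MvPolynomial (Var k n) K}
    {x : Var k n → K} (h : ∀ c : Fin k → K, eval (fun v => c v.1 * x v) f = 0)
    (d : Fin k → ℕ) : eval x (weightedHomogeneousComponent (wt k n) d f) = 0 := by
  classical
  have hfin := weightedHomogeneousComponent_finsupp (w := wt k n) f
  set S := hfin.toFinset
  have hsum : ∑ m ∈ S, weightedHomogeneousComponent (wt k n) m f = f := by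
    rw [← finsum_eq_sum _ hfin, sum_weightedHomogeneousComponent]
  set q : MvPolynomial (Fin k) K := ∑ m ∈ S,
    monomial (Finsupp.equivFunOnFinite.symm m) (eval x (weightedHomogeneousComponent (wt k n) m f))
  have hq : q = 0 := by
    refine MvPolynomial.funext fun c => ?_
    rw [map_zero, ← h c, ← hsum, map_sum, map_sum]
    refine Finset.sum_congr rfl fun m _ => ?_
    rw [eval_blockScale (weightedHomogeneousComponent_isWeightedHomogeneous m f), eval_monomial,
      Finsupp.prod_fintype _ _ (fun _ => pow_zero _), mul_comm]
    rfl
  have hd := congrArg (coeff (Finsupp.equivFunOnFinite.symm d)) hq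
  simp only [q, coeff_sum, coeff_monomial, EmbeddingLike.apply_eq_iff_eq, Finset.sum_ite_eq',
    coeff_zero] at hd
  split_ifs at hd with hdS
  · exact hd
  · rw [hfin.mem_toFinset, Function.mem_support, not_not] at hdS
    rw [hdS, map_zero]

lemma mem_idealOfPoints_iff {P : Fin s → PointRep K k n} {f : MvPolynomial (Var k n) K} :
    f ∈ idealOfPoints K P ↔ ∀ a (c : Fin k → K), eval (fun v => c v.1 * P a v.1 v.2) f = 0 := by
  simp [idealOfPoints]

lemma weightedHomogeneousComponent_mem_idealOfPoints [Infinite K] {P : Fin s → PointRep K k n}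
    {f : MvPolynomial (Var k n) K} (hf : f ∈ idealOfPoints K P) (d : Fin k → ℕ) :
    weightedHomogeneousComponent (wt k n) d f ∈ idealOfPoints K P := by
  rw [mem_idealOfPoints_iff] at hf ⊢
  intro a c
  rw [eval_blockScale (weightedHomogeneousComponent_isWeightedHomogeneous d f),
    eval_weightedHomogeneousComponent_eq_zero (hf a), mul_zero]

lemma mem_idealOfPoints_iff_evalPoints {P : Fin s → PointRep K k n} {d : Fin k → ℕ}
    {f : MvPolynomial (Var k n) K} (hf : f ∈ piece K k n d) :
    f ∈ idealOfPoints K P ↔ evalPoints P f = 0 := by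
  simp only [mem_idealOfPoints_iff, eval_blockScale hf, funext_iff, evalPoints_apply,
    Pi.zero_apply]
  exact ⟨fun h a => by simpa using h a 1, fun h a c => by rw [h a, mul_zero]⟩

lemma mem_idealPiece_iff {P : Fin s → PointRep K k n} {d : Fin k → ℕ}
    {f : MvPolynomial (Var k n) K} :
    f ∈ idealPiece K (idealOfPoints K P) d ↔ f ∈ piece K k n d ∧ evalPoints P f = 0 := by
  rw [idealPiece, Submodule.mem_inf, Submodule.restrictScalars_mem, and_comm]
  exact and_congr_right mem_idealOfPoints_iff_evalPoints

end Evaluation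

section Separators

variable {K} {k : ℕ} {n : Fin k → ℕ} {s : ℕ}

lemma ker_evalPoints_domRestrict (P : Fin s → PointRep K k n) (d : Fin k → ℕ) :
    LinearMap.ker ((evalPoints P).domRestrict (piece K k n d))
      = (idealPiece K (idealOfPoints K P) d).comap (piece K k n d).subtype := by
  ext ⟨f, hf⟩
  simp [idealPiece, mem_idealOfPoints_iff_evalPoints hf]

lemma finrank_range_evalPoints_domRestrict (P : Fin s → PointRep K k n) (d : Fin k → ℕ) :
    Module.finrank K (LinearMap.range ((evalPoints P).domRestrict (piece K k n d)))
      = hilbert K P d := by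
  have hrank := LinearMap.finrank_range_add_finrank_ker
    ((evalPoints P).domRestrict (piece K k n d))
  rw [ker_evalPoints_domRestrict,
    LinearEquiv.finrank_eq (Submodule.comapSubtypeEquivOfLe idealPiece_le_piece),
    finrank_piece] at hrank
  rw [hilbert]
  omega

lemma idealPiece_eq_bot {P : Fin s → PointRep K k n} (hgen : GenericPosition K P)
    {d : Fin k → ℕ} (hd : NN k n d ≤ s) : idealPiece K (idealOfPoints K P) d = ⊥ := by
  have hH := hgen.2 d
  rw [hilbert, min_eq_left hd] at hH
  rw [← Submodule.finrank_eq_zero]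
  have := NN_pos (n := n) d
  omega

def IsSeparatorFamily (P : Fin s → PointRep K k n) (c : Fin k → ℕ)
    (h : Fin s → MvPolynomial (Var k n) K) : Prop :=
  ∀ b, h b ∈ piece K k n c ∧ evalPoints P (h b) = Pi.single b 1

lemma exists_separators {P : Fin s → PointRep K k n} (hgen : GenericPosition K P)
    {c : Fin k → ℕ} (hc : s ≤ NN k n c) :
    ∃ h : Fin s → MvPolynomial (Var k n) K, IsSeparatorFamily P c h := by
  have hrange : LinearMap.range ((evalPoints P).domRestrict (piece K k n c)) = ⊤ := by
    apply Submodule.eq_top_of_finrank_eq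
    rw [finrank_range_evalPoints_domRestrict, hgen.2, min_eq_right hc, Module.finrank_fin_fun]
  choose h hh using fun b : Fin s => LinearMap.range_eq_top.1 hrange (Pi.single b 1)
  exact ⟨fun b => h b, fun b => ⟨(h b).2, hh b⟩⟩

lemma sub_interpolant_mem_idealPiece {P : Fin s → PointRep K k n} {c : Fin k → ℕ}
    {h : Fin s → MvPolynomial (Var k n) K} (hh : IsSeparatorFamily P c h)
    {g : MvPolynomial (Var k n) K} (hg : g ∈ piece K k n c) :
    g - ∑ a, evalPoints P g a • h a ∈ idealPiece K (idealOfPoints K P) c := by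
  refine mem_idealPiece_iff.2 ⟨sub_mem hg (sum_mem fun a _ => Submodule.smul_mem _ _ (hh a).1), ?_⟩
  simp [map_sum, (hh _).2, ← Pi.single_smul, Finset.univ_sum_single]

lemma mul_mem_idealPiece_of_separator {P : Fin s → PointRep K k n} {c A : Fin k → ℕ}
    {h : Fin s → MvPolynomial (Var k n) K} (hh : IsSeparatorFamily P c h)
    {L : MvPolynomial (Var k n) K} (hL : L ∈ piece K k n A) {b : Fin s}
    (hLb : evalPoints P L b = 0) :
    L * h b ∈ idealPiece K (idealOfPoints K P) (A + c) := by
  refine mem_idealPiece_iff.2 ⟨mul_mem_piece hL (hh b).1, funext fun a => ?_⟩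
  rw [evalPoints_mul, (hh b).2, Pi.zero_apply]
  rcases eq_or_ne a b with rfl | hab
  · rw [hLb, zero_mul]
  · rw [Pi.single_eq_of_ne hab, mul_zero]

lemma exists_sub_sum_mul_mem_mulSpan {P : Fin s → PointRep K k n} {c : Fin k → ℕ} {l : Fin k}
    {h : Fin s → MvPolynomial (Var k n) K} (hh : IsSeparatorFamily P c h)
    {f : MvPolynomial (Var k n) K} (hf : f ∈ mulSpan K l (piece K k n c)) :
    ∃ L : Fin s → MvPolynomial (Var k n) K,
      (∀ a, L a ∈ piece K k n (e l) ∧ evalPoints P (L a) a = evalPoints P f a) ∧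
      f - ∑ a, L a * h a ∈ mulSpan K l (idealPiece K (idealOfPoints K P) c) := by
  induction hf using Submodule.span_induction with
  | mem f hf =>
    obtain ⟨m, g, hg, rfl⟩ := hf
    refine ⟨fun a => evalPoints P g a • X ⟨l, m⟩,
      fun a => ⟨Submodule.smul_mem _ _ (X_mem_piece _), ?_⟩,
      Submodule.subset_span ⟨m, _, sub_interpolant_mem_idealPiece hh hg, ?_⟩⟩
    · simp [evalPoints_apply, mul_comm]
    · simp [mul_sub, Finset.mul_sum]
  | zero => exact ⟨0, fun a => ⟨zero_mem _, by simp⟩, by simp⟩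
  | add f g _ _ hf hg =>
    obtain ⟨L, hL, hfL⟩ := hf
    obtain ⟨M, hM, hgM⟩ := hg
    refine ⟨L + M, fun a => ⟨add_mem (hL a).1 (hM a).1, by simp [(hL a).2, (hM a).2]⟩, ?_⟩
    convert add_mem hfL hgM using 1
    simp only [Pi.add_apply, add_mul, Finset.sum_add_distrib]
    ring
  | smul r f _ hf =>
    obtain ⟨L, hL, hfL⟩ := hf
    refine ⟨r • L, fun a => ⟨Submodule.smul_mem _ r (hL a).1, by simp [(hL a).2]⟩, ?_⟩
    convert Submodule.smul_mem _ r hfL using 1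
    simp [smul_sub, Finset.smul_sum]

/-- Subtracting from `f` its interpolant through separators `g` of degree `c + e l'` leaves an
element of `R_{e_l} I_{c+e_l'}` plus `∑ L a * g a` with `L a` vanishing at `P a`; doing the same to
each `g a` with separators `h` of degree `c` leaves products `L a * h a` and `M b * h b` (`b ≠ a`)
that vanish at every point. -/
lemma idealPiece_add_e_add_e_le {P : Fin s → PointRep K k n} (hgen : GenericPosition K P)
    {J : Ideal (MvPolynomial (Var k n) K)} {c : Fin k → ℕ} (l l' : Fin k) (hc : s ≤ NN k n c)
    (hJl' : idealPiece K (idealOfPoints K P) (c + e l') ≤ J.restrictScalars K)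
    (hJl : idealPiece K (idealOfPoints K P) (c + e l) ≤ J.restrictScalars K) :
    idealPiece K (idealOfPoints K P) (c + e l' + e l) ≤ J.restrictScalars K := by
  intro f hf
  obtain ⟨hfP, hfI⟩ := mem_idealPiece_iff.1 hf
  obtain ⟨g, hg⟩ := exists_separators hgen (hc.trans (NN_mono le_self_add))
  obtain ⟨h, hh⟩ := exists_separators hgen hc
  obtain ⟨L, hL, hfL⟩ := exists_sub_sum_mul_mem_mulSpan hg (piece_add_e_le_mulSpan _ l hfP)
  rw [← sub_add_cancel f (∑ a, L a * g a)]
  refine J.add_mem (mulSpan_le_restrictScalars hJl' hfL) (J.sum_mem fun a _ => ?_)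
  have hLa : evalPoints P (L a) a = 0 := by rw [(hL a).2, hfI, Pi.zero_apply]
  obtain ⟨M, hM, hgM⟩ := exists_sub_sum_mul_mem_mulSpan hh (piece_add_e_le_mulSpan _ l' (hg a).1)
  rw [← sub_add_cancel (g a) (∑ b, M b * h b), mul_add, Finset.mul_sum]
  have hLJ : ∀ w ∈ idealPiece K (idealOfPoints K P) c,
      L a * w ∈ idealPiece K (idealOfPoints K P) (c + e l) := fun w hw => by
    rw [add_comm]
    exact mul_mem_idealPiece (hL a).1 hw
  refine J.add_mem (mulSpan_le_restrictScalars hJl (mul_mem_mulSpan hLJ hgM))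
    (J.sum_mem fun b _ => ?_)
  rcases eq_or_ne b a with rfl | hba
  · rw [mul_left_comm]
    refine J.mul_mem_left _ (hJl ?_)
    rw [add_comm c]
    exact mul_mem_idealPiece_of_separator hh (hL b).1 hLa
  · refine J.mul_mem_left _ (hJl' ?_)
    rw [add_comm c]
    refine mul_mem_idealPiece_of_separator hh (hM b).1 ?_
    rw [(hM b).2, (hg a).2, Pi.single_eq_of_ne hba]

end Separators

section Generation

variable {K} {k : ℕ} {n : Fin k → ℕ} {s : ℕ}

lemma idealPiece_le_of_generic {P : Fin s → PointRep K k n} (hgen : GenericPosition K P)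
    {J : Ideal (MvPolynomial (Var k n) K)}
    (hT : ∀ i ∈ Dset k n s ∪ ⋃ l : Fin k, (fun d => d + e l) '' Dset k n s,
      idealPiece K (idealOfPoints K P) i ≤ J.restrictScalars K) (d : Fin k → ℕ) :
    idealPiece K (idealOfPoints K P) d ≤ J.restrictScalars K := by
  induction d using WellFoundedLT.induction with
  | _ d ih =>
  rcases le_or_gt (NN k n d) s with hd | hd
  · rw [idealPiece_eq_bot hgen hd]
    exact bot_le
  obtain ⟨D, hD, hDd⟩ := exists_mem_Dset_le hd
  obtain ⟨u, rfl⟩ := exists_add_of_le hDd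
  rcases eq_zero_or_exists_eq_add_e u with rfl | ⟨l, v, rfl⟩
  · exact hT _ (Or.inl (by simpa using hD))
  rcases eq_zero_or_exists_eq_add_e v with rfl | ⟨l', c, rfl⟩
  · exact hT _ (Or.inr (Set.mem_iUnion.2 ⟨l, D, hD, by simp⟩))
  simp only [← add_assoc] at ih ⊢
  refine idealPiece_add_e_add_e_le hgen l l' (hD.1.le.trans (NN_mono le_self_add))
    (ih _ (lt_add_of_pos_right _ (e_pos l))) (ih _ ?_)
  exact (lt_add_of_pos_right _ (e_pos l')).trans_eq (add_right_comm _ _ _)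

end Generation

theorem generators_in_T_general (K : Type) [Field K] [IsAlgClosed K]
    (k : ℕ) (n : Fin k → ℕ) {s : ℕ} (P : Fin s → PointRep K k n)
    (hgen : GenericPosition K P) :
    Ideal.span
      (⋃ i ∈ Dset k n s ∪ ⋃ l : Fin k, (fun d => d + e l) '' Dset k n s,
        (idealPiece K (idealOfPoints K P) i : Set (MvPolynomial (Var k n) K)))
      = idealOfPoints K P := by
  refine le_antisymm (Ideal.span_le.2 (Set.iUnion₂_subset fun i _ f hf => hf.1)) fun f hf => ?_
  refine mem_of_weightedHomogeneousComponent_mem (w := wt k n) fun d => ?_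
  exact idealPiece_le_of_generic hgen (J := Ideal.span _)
    (fun i hi g hg => Ideal.subset_span (Set.mem_iUnion₂.2 ⟨i, hi, hg⟩)) d
    ⟨weightedHomogeneousComponent_mem_idealOfPoints hf d,
      weightedHomogeneousComponent_isWeightedHomogeneous d f⟩

theorem generators_in_T (K : Type) [Field K] [IsAlgClosed K] [CharZero K]
    (k : ℕ) (n : Fin k → ℕ) {s : ℕ} (P : Fin s → PointRep K k n)
    (hgen : GenericPosition K P) :
    Ideal.span
      (⋃ i ∈ Dset k n s ∪ ⋃ l : Fin k, (fun d => d + e l) '' Dset k n s,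
        (idealPiece K (idealOfPoints K P) i : Set (MvPolynomial (Var k n) K)))
      = idealOfPoints K P :=
  generators_in_T_general K k n P hgen

end MultiProjPoints
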